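/- For γ > 0 and c > 0, the function h(p) = ln(1+pγ) − (p+c)γ/(1+pγ) is strictly increasing on [0, ∞), satisfies h(0) = −cγ < 0, and tends to +∞ as p → ∞; hence it has a unique positive root. -/

import Mathlib

/-! The derivative `(p + c) γ² / (1 + p γ)²` is positive, so `h` is strictly increasing; the
fraction in `h` stays below `1 + c γ` while `log (1 + p γ) → ∞`, and `h 0 = -c γ < 0`, so the
intermediate value theorem gives exactly one positive root. -/

open Set Filter

theorem StrictMonoOn.existsUnique_eq_of_tendsto_atTop {α β : Type*}
    [ConditionallyCompleteLinearOrder α] [DenselyOrdered α] [TopologicalSpace α] [OrderTopology α]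
    [LinearOrder β] [TopologicalSpace β] [OrderClosedTopology β]
    {f : α → β} {a : α} {y : β} (hmono : StrictMonoOn f (Ici a)) (hcont : ContinuousOn f (Ici a))
    (ha : f a < y) (htop : Tendsto f atTop atTop) : ∃! p, a < p ∧ f p = y := by
  have : Nonempty α := ⟨a⟩
  obtain ⟨b, hab, hyb⟩ := ((eventually_ge_atTop a).and (htop.eventually_ge_atTop y)).exists
  obtain ⟨p, ⟨hap, -⟩, hp⟩ := intermediate_value_Icc hab (hcont.mono Icc_subset_Ici_self) ⟨ha.le, hyb⟩
  have hap : a < p := hap.lt_of_ne (by rintro rfl; exact ha.ne hp)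
  exact ⟨p, ⟨hap, hp⟩, fun q ⟨haq, hq⟩ => hmono.injOn haq.le hap.le (hq.trans hp.symm)⟩

noncomputable def circuitPowerFn (γ c p : ℝ) : ℝ :=
  Real.log (1 + p * γ) - (p + c) * γ / (1 + p * γ)

theorem hasDerivAt_circuitPowerFn {γ c p : ℝ} (hp : 0 < 1 + p * γ) :
    HasDerivAt (circuitPowerFn γ c) ((p + c) * γ ^ 2 / (1 + p * γ) ^ 2) p := by
  have hlin : HasDerivAt (fun p : ℝ => 1 + p * γ) γ p := by
    simpa using ((hasDerivAt_id p).mul_const γ).const_add 1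
  have hnum : HasDerivAt (fun p : ℝ => (p + c) * γ) γ p := by
    simpa using ((hasDerivAt_id p).add_const c).mul_const γ
  refine ((hlin.log hp.ne').sub (hnum.div hlin hp.ne')).congr_deriv ?_
  field_simp
  ring

theorem circuitPowerFn_zero (γ c : ℝ) : circuitPowerFn γ c 0 = -(c * γ) := by
  simp [circuitPowerFn]

theorem continuousOn_circuitPowerFn {γ c : ℝ} (hγ : 0 ≤ γ) :
    ContinuousOn (circuitPowerFn γ c) (Ici 0) := fun p hp => by
  have hp : 0 ≤ p := hp
  exact (hasDerivAt_circuitPowerFn (c := c) (by positivity)).continuousAt.continuousWithinAt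

theorem strictMonoOn_circuitPowerFn {γ c : ℝ} (hγ : 0 < γ) (hc : 0 ≤ c) :
    StrictMonoOn (circuitPowerFn γ c) (Ici 0) := by
  refine strictMonoOn_of_deriv_pos (convex_Ici 0) (continuousOn_circuitPowerFn hγ.le) fun p hp => ?_
  rw [interior_Ici] at hp
  have hp : 0 < p := hp
  rw [(hasDerivAt_circuitPowerFn (c := c) (by positivity)).deriv]
  positivity

theorem tendsto_circuitPowerFn_atTop {γ c : ℝ} (hγ : 0 < γ) (hc : 0 ≤ c) :
    Tendsto (circuitPowerFn γ c) atTop atTop := by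
  have hlog : Tendsto (fun p : ℝ => Real.log (1 + p * γ) - (1 + c * γ)) atTop atTop :=
    tendsto_atTop_add_const_right _ _ <| Real.tendsto_log_atTop.comp <|
      tendsto_atTop_add_const_left _ _ <| tendsto_id.atTop_mul_const hγ
  refine tendsto_atTop_mono' _ ?_ hlog
  filter_upwards [eventually_ge_atTop 0] with p hp
  have hfrac : (p + c) * γ / (1 + p * γ) ≤ 1 + c * γ := by
    rw [div_le_iff₀ (by positivity)]
    nlinarith [mul_nonneg hp hγ.le, mul_nonneg (mul_nonneg hc hγ.le) (mul_nonneg hp hγ.le)]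
  unfold circuitPowerFn
  linarith

theorem h_strictMono_unique_root (γ c : ℝ) (hγ : 0 < γ) (hc : 0 < c)
    (h : ℝ → ℝ) (hh : ∀ p, h p = Real.log (1 + p * γ) - (p + c) * γ / (1 + p * γ)) :
    StrictMonoOn h (Set.Ici (0 : ℝ)) ∧
    h 0 = -(c * γ) ∧ h 0 < 0 ∧
    Filter.Tendsto h Filter.atTop Filter.atTop ∧
    ∃! p : ℝ, 0 < p ∧ h p = 0 := by
  obtain rfl : h = circuitPowerFn γ c := funext hh
  have hmono := strictMonoOn_circuitPowerFn hγ hc.le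
  have htop := tendsto_circuitPowerFn_atTop hγ hc.le
  have hneg : circuitPowerFn γ c 0 < 0 := by
    rw [circuitPowerFn_zero]; exact neg_neg_of_pos (mul_pos hc hγ)
  exact ⟨hmono, circuitPowerFn_zero γ c, hneg, htop,
    hmono.existsUnique_eq_of_tendsto_atTop (continuousOn_circuitPowerFn hγ.le) hneg htop⟩
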